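/- Let Γ be a connected graph labelled by a set S, let v₀ be a vertex, and let T ⊆ E be a spanning tree of Γ, i.e., T is closed under the edge involution, the subgraph (V, T) is connected, and (V, T) contains no nonempty reduced closed path. For each vertex u let t_u denote the unique reduced path in T from v₀ to u. Then the normal closure in F(S) of { ℓ̄(p) : p a closed path of Γ } equals the normal closure in F(S) of { ℓ̄(t_{α(e)} · e · (t_{ω(e)})⁻¹) : e ∈ E \ T }. (This shows that the group defined by Γ is presented by the labels of a free basis of the fundamental group of Γ.) -/

import Mathlib

/-- A graph: vertex set `V`, edge set `E`, initial/terminal vertex maps, and a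
fixed-point-free involution on edges swapping initial and terminal vertices. -/
structure LabGraph (V E : Type*) where
  init : E → V
  term : E → V
  inv : E → E
  inv_inv : ∀ e, inv (inv e) = e
  inv_ne : ∀ e, inv e ≠ e
  init_inv : ∀ e, init (inv e) = term e
  term_inv : ∀ e, term (inv e) = init e

/-- A path: the terminal vertex of each edge is the initial vertex of the next one. -/
def IsPath {V E : Type*} (G : LabGraph V E) (l : List E) : Prop :=
  l.Chain' (fun e f => G.term e = G.init f)

/-- A reduced path contains no subpath of the form `(e, e⁻¹)`. -/
def IsReducedPath {V E : Type*} (G : LabGraph V E) (l : List E) : Prop :=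
  l.Chain' (fun e f => f ≠ G.inv e)

/-- A closed path: its initial vertex equals its terminal vertex (the empty path is closed). -/
def IsClosedPath {V E : Type*} (G : LabGraph V E) (l : List E) : Prop :=
  l.head?.map G.init = l.getLast?.map G.term

/-- One step of deletion of a subpath of the form `(e, e⁻¹)`. -/
def DelStep {V E : Type*} (G : LabGraph V E) (l l' : List E) : Prop :=
  ∃ (a b : List E) (e : E), l = a ++ e :: G.inv e :: b ∧ l' = a ++ b

/-- A path is trivial if it becomes empty after consecutive deletions of subpaths `(e, e⁻¹)`. -/
def IsTrivialPath {V E : Type*} (G : LabGraph V E) (l : List E) : Prop :=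
  Relation.ReflTransGen (DelStep G) l []

/-- A simple closed path: a closed, non-trivial path no proper (nonempty) subpath
of which is closed. -/
def IsSimpleClosed {V E : Type*} (G : LabGraph V E) (l : List E) : Prop :=
  IsPath G l ∧ IsClosedPath G l ∧ ¬ IsTrivialPath G l ∧
    ∀ a m b : List E, l = a ++ m ++ b → m ≠ [] → a ++ b ≠ [] → ¬ IsClosedPath G m

/-- `HasEnds G l x y` : the path `l` goes from vertex `x` to vertex `y`
(an empty path goes from a vertex to itself). -/
def HasEnds {V E : Type*} (G : LabGraph V E) (l : List E) (x y : V) : Prop :=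
  (l = [] → x = y) ∧
    ∀ h : l ≠ [], G.init (l.head h) = x ∧ G.term (l.getLast h) = y

/-
Put `τ u := ℓ̄(t_u)`. For every path `p` from `x` to `y` the product `τ x · ℓ̄(p) · (τ y)⁻¹`
telescopes into the product over the edges `e` of `p` of `τ (α e) · ℓ(e) · (τ (ω e))⁻¹`, the
label of the closed path `t_{α e} · e · t_{ω e}⁻¹`. So the label of a closed path is a
conjugate of a product of such elements, and conversely each of them is the label of a closed
path. It remains to see that the factors coming from tree edges vanish: a closed path in `T`
freely reduces to a reduced closed path in `T`, which is empty, so its label is trivial.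
-/

namespace LabGraph

variable {V E S : Type*} (G : LabGraph V E)

def IsWalk : List E → V → V → Prop
  | [], x, y => x = y
  | e :: l, x, y => G.init e = x ∧ IsWalk l (G.term e) y

def reversePath (l : List E) : List E := l.reverse.map G.inv

variable {G}

theorem IsWalk.isPath {l : List E} {x y : V} (h : G.IsWalk l x y) : IsPath G l := by
  induction l generalizing x with
  | nil => exact List.isChain_nil
  | cons e l ih =>
    cases l with
    | nil => exact List.isChain_singleton e
    | cons f l => exact List.isChain_cons_cons.mpr ⟨h.2.1.symm, ih h.2⟩

theorem IsWalk.append {l₁ l₂ : List E} {x y z : V} (h₁ : G.IsWalk l₁ x y)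
    (h₂ : G.IsWalk l₂ y z) : G.IsWalk (l₁ ++ l₂) x z := by
  induction l₁ generalizing x with
  | nil => exact (show x = y from h₁) ▸ h₂
  | cons e l ih => exact ⟨h₁.1, ih h₁.2⟩

theorem IsWalk.of_append {l₁ l₂ : List E} {x z : V} (h : G.IsWalk (l₁ ++ l₂) x z) :
    ∃ y, G.IsWalk l₁ x y ∧ G.IsWalk l₂ y z := by
  induction l₁ generalizing x with
  | nil => exact ⟨x, rfl, h⟩
  | cons e l ih =>
    obtain ⟨y, h₁, h₂⟩ := ih h.2
    exact ⟨y, ⟨h.1, h₁⟩, h₂⟩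

theorem IsWalk.term_getLast {l : List E} {x y : V} (h : G.IsWalk l x y) (hl : l ≠ []) :
    G.term (l.getLast hl) = y := by
  induction l generalizing x with
  | nil => exact absurd rfl hl
  | cons e l ih =>
    cases l with
    | nil => exact h.2
    | cons f l => exact ih h.2 (List.cons_ne_nil f l)

theorem IsWalk.isClosedPath {l : List E} {x : V} (h : G.IsWalk l x x) : IsClosedPath G l := by
  cases l with
  | nil => rfl
  | cons e l =>
    simp [IsClosedPath, List.getLast?_eq_some_getLast (List.cons_ne_nil e l), h.1,
      h.term_getLast (List.cons_ne_nil e l)]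

theorem isWalk_of_isPath {e : E} {l : List E} (h : IsPath G (e :: l)) :
    G.IsWalk (e :: l) (G.init e) (G.term ((e :: l).getLast (List.cons_ne_nil e l))) := by
  induction l generalizing e with
  | nil => exact ⟨rfl, rfl⟩
  | cons f l ih =>
    obtain ⟨hef, hl⟩ := List.isChain_cons_cons.mp h
    exact ⟨rfl, hef ▸ ih hl⟩

theorem isWalk_of_hasEnds {l : List E} {x y : V} (hp : IsPath G l) (he : HasEnds G l x y) :
    G.IsWalk l x y := by
  cases l with
  | nil => exact he.1 rfl
  | cons e l =>
    obtain ⟨hx, hy⟩ := he.2 (List.cons_ne_nil e l)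
    exact hx ▸ hy ▸ isWalk_of_isPath hp

theorem exists_isWalk_of_isClosedPath [Nonempty V] {l : List E} (hp : IsPath G l)
    (hc : IsClosedPath G l) : ∃ x, G.IsWalk l x x := by
  cases l with
  | nil => exact ⟨Classical.arbitrary V, rfl⟩
  | cons e l =>
    refine ⟨G.init e, isWalk_of_hasEnds hp ⟨nofun, fun _ => ⟨rfl, ?_⟩⟩⟩
    simpa [IsClosedPath, List.getLast?_eq_some_getLast (List.cons_ne_nil e l)] using hc.symm

theorem IsWalk.reversePath {l : List E} {x y : V} (h : G.IsWalk l x y) :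
    G.IsWalk (G.reversePath l) y x := by
  induction l generalizing x with
  | nil => exact (show x = y from h).symm
  | cons e l ih =>
    simp only [LabGraph.reversePath, List.reverse_cons, List.map_append] at ih ⊢
    exact (ih h.2).append ⟨G.init_inv e, (G.term_inv e).trans h.1⟩

theorem forall_mem_reversePath {T : Set E} (hT : ∀ e ∈ T, G.inv e ∈ T) {l : List E}
    (hl : ∀ e ∈ l, e ∈ T) : ∀ e ∈ G.reversePath l, e ∈ T := by
  simp only [LabGraph.reversePath, List.mem_map, List.mem_reverse]
  rintro _ ⟨e, he, rfl⟩
  exact hT e (hl e he)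

theorem IsWalk.append_cons_reversePath {a b : List E} {e : E} {x y : V}
    (ha : G.IsWalk a x (G.init e)) (hb : G.IsWalk b y (G.term e)) :
    G.IsWalk (a ++ e :: G.reversePath b) x y :=
  ha.append ⟨rfl, hb.reversePath⟩

theorem IsWalk.of_delStep {l l' : List E} {x y : V} (h : DelStep G l l')
    (hw : G.IsWalk l x y) : G.IsWalk l' x y := by
  obtain ⟨a, b, e, rfl, rfl⟩ := h
  obtain ⟨z, ha, he, -, hb⟩ := hw.of_append
  exact ha.append (he ▸ G.term_inv e ▸ hb)

theorem IsWalk.of_reflTransGen_delStep {l l' : List E} {x y : V}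
    (h : Relation.ReflTransGen (DelStep G) l l') (hw : G.IsWalk l x y) : G.IsWalk l' x y := by
  induction h with
  | refl => exact hw
  | tail _ hstep ih => exact ih.of_delStep hstep

theorem subset_of_reflTransGen_delStep {l l' : List E}
    (h : Relation.ReflTransGen (DelStep G) l l') : l' ⊆ l := by
  induction h with
  | refl => exact List.Subset.refl l
  | tail _ hstep ih =>
    obtain ⟨a, b, e, rfl, rfl⟩ := hstep
    refine List.Subset.trans ?_ ih
    intro f
    simp only [List.mem_append, List.mem_cons]
    tauto

theorem exists_reflTransGen_delStep_isReducedPath (l : List E) :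
    ∃ r, Relation.ReflTransGen (DelStep G) l r ∧ IsReducedPath G r := by
  induction l with
  | nil => exact ⟨[], .refl, List.isChain_nil⟩
  | cons e l ih =>
    obtain ⟨r, hr, hred⟩ := ih
    have hcons : Relation.ReflTransGen (DelStep G) (e :: l) (e :: r) :=
      hr.lift (e :: ·) fun _ _ ⟨a, b, f, h, h'⟩ => ⟨e :: a, b, f, h ▸ rfl, h' ▸ rfl⟩
    cases r with
    | nil => exact ⟨[e], hcons, List.isChain_singleton e⟩
    | cons f r =>
      by_cases hf : f = G.inv e
      · exact ⟨r, hcons.tail ⟨[], r, e, hf ▸ rfl, rfl⟩, hred.tail⟩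
      · exact ⟨e :: f :: r, hcons, List.isChain_cons_cons.mpr ⟨hf, hred⟩⟩

variable {ℓ : E → S × Bool}

theorem mk_map_eq_of_delStep (hℓ : ∀ e, ℓ (G.inv e) = ((ℓ e).1, !(ℓ e).2)) {l l' : List E}
    (h : DelStep G l l') : FreeGroup.mk (l.map ℓ) = FreeGroup.mk (l'.map ℓ) := by
  obtain ⟨a, b, e, rfl, rfl⟩ := h
  simp only [List.map_append, List.map_cons, hℓ e]
  exact Quot.sound FreeGroup.Red.Step.not

theorem mk_map_eq_of_reflTransGen_delStep (hℓ : ∀ e, ℓ (G.inv e) = ((ℓ e).1, !(ℓ e).2))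
    {l l' : List E} (h : Relation.ReflTransGen (DelStep G) l l') :
    FreeGroup.mk (l.map ℓ) = FreeGroup.mk (l'.map ℓ) := by
  induction h with
  | refl => rfl
  | tail _ hstep ih => exact ih.trans (mk_map_eq_of_delStep hℓ hstep)

theorem mk_map_reversePath (hℓ : ∀ e, ℓ (G.inv e) = ((ℓ e).1, !(ℓ e).2)) (l : List E) :
    FreeGroup.mk ((G.reversePath l).map ℓ) = (FreeGroup.mk (l.map ℓ))⁻¹ := by
  simp [FreeGroup.inv_mk, FreeGroup.invRev, LabGraph.reversePath, Function.comp_def, hℓ]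

theorem mk_map_eq_one_of_isWalk_of_subset (hℓ : ∀ e, ℓ (G.inv e) = ((ℓ e).1, !(ℓ e).2))
    {T : Set E} (hT : ∀ p : List E, IsPath G p → (∀ e ∈ p, e ∈ T) → IsReducedPath G p →
      IsClosedPath G p → p = [])
    {l : List E} {x : V} (hw : G.IsWalk l x x) (hl : ∀ e ∈ l, e ∈ T) :
    FreeGroup.mk (l.map ℓ) = 1 := by
  obtain ⟨r, hr, hred⟩ := exists_reflTransGen_delStep_isReducedPath (G := G) l
  have hrw := hw.of_reflTransGen_delStep hr
  have hr_nil : r = [] :=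
    hT r hrw.isPath (fun e he => hl e (subset_of_reflTransGen_delStep hr he)) hred
      hrw.isClosedPath
  rw [mk_map_eq_of_reflTransGen_delStep hℓ hr, hr_nil]
  rfl

theorem mk_map_append_cons_reversePath (hℓ : ∀ e, ℓ (G.inv e) = ((ℓ e).1, !(ℓ e).2))
    (a b : List E) (e : E) :
    FreeGroup.mk ((a ++ e :: G.reversePath b).map ℓ) =
      FreeGroup.mk (a.map ℓ) * FreeGroup.mk [ℓ e] * (FreeGroup.mk (b.map ℓ))⁻¹ := by
  rw [List.map_append, List.map_cons, ← List.singleton_append, ← FreeGroup.mul_mk,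
    ← FreeGroup.mul_mk, mk_map_reversePath hℓ, mul_assoc]

theorem IsWalk.mul_mk_map_mul_inv_eq_prod (τ : V → FreeGroup S) {l : List E} {x y : V}
    (h : G.IsWalk l x y) :
    τ x * FreeGroup.mk (l.map ℓ) * (τ y)⁻¹ =
      (l.map fun e => τ (G.init e) * FreeGroup.mk [ℓ e] * (τ (G.term e))⁻¹).prod := by
  induction l generalizing x with
  | nil =>
    rw [show x = y from h]
    simp [← FreeGroup.one_eq_mk]
  | cons e l ih =>
    simp only [List.map_cons, List.prod_cons]
    rw [← ih h.2, ← h.1, ← List.singleton_append, ← FreeGroup.mul_mk]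
    group

end LabGraph

open LabGraph in
theorem normalClosure_closed_eq_normalClosure_basis_general
    {V E S : Type*} (G : LabGraph V E) (ℓ : E → S × Bool)
    (hinv : ∀ e, ℓ (G.inv e) = ((ℓ e).1, !(ℓ e).2))
    (v₀ : V) (T : Set E)
    (hTinv : ∀ e ∈ T, G.inv e ∈ T)
    (hTtree : ∀ p : List E, IsPath G p → (∀ e ∈ p, e ∈ T) → IsReducedPath G p →
      IsClosedPath G p → p = [])
    (t : V → List E)
    (ht : ∀ u : V, IsPath G (t u) ∧ (∀ e ∈ t u, e ∈ T) ∧ IsReducedPath G (t u) ∧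
      HasEnds G (t u) v₀ u) :
    Subgroup.normalClosure
        {x : FreeGroup S | ∃ p : List E, IsPath G p ∧ IsClosedPath G p ∧
          x = FreeGroup.mk (p.map ℓ)} =
      Subgroup.normalClosure
        {x : FreeGroup S | ∃ e : E, e ∉ T ∧
          x = FreeGroup.mk ((t (G.init e)).map ℓ) * FreeGroup.mk [ℓ e] *
            (FreeGroup.mk ((t (G.term e)).map ℓ))⁻¹} := by
  have : Nonempty V := ⟨v₀⟩
  set τ : V → FreeGroup S := fun u => FreeGroup.mk ((t u).map ℓ)
  set loop : E → List E := fun e => t (G.init e) ++ e :: G.reversePath (t (G.term e))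
  have htw (u : V) : G.IsWalk (t u) v₀ u := isWalk_of_hasEnds (ht u).1 (ht u).2.2.2
  have hloop_walk (e : E) : G.IsWalk (loop e) v₀ v₀ := (htw _).append_cons_reversePath (htw _)
  have hloop_label (e : E) :
      FreeGroup.mk ((loop e).map ℓ) = τ (G.init e) * FreeGroup.mk [ℓ e] * (τ (G.term e))⁻¹ :=
    mk_map_append_cons_reversePath hinv _ _ e
  apply le_antisymm
  · refine Subgroup.normalClosure_le_normal ?_
    rintro _ ⟨p, hp, hc, rfl⟩
    obtain ⟨x, hw⟩ := exists_isWalk_of_isClosedPath hp hc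
    rw [show FreeGroup.mk (p.map ℓ) = (τ x)⁻¹ * (τ x * FreeGroup.mk (p.map ℓ) * (τ x)⁻¹) * τ x
      by group, hw.mul_mk_map_mul_inv_eq_prod τ]
    refine Subgroup.normalClosure_normal.conj_mem' _
      (Subgroup.list_prod_mem _ (List.forall_mem_map.mpr fun e _ => ?_)) _
    by_cases heT : e ∈ T
    · have hloop_tree : ∀ f ∈ loop e, f ∈ T := by
        simp only [loop, List.mem_append, List.mem_cons]
        rintro f (hf | rfl | hf)
        exacts [(ht _).2.1 f hf, heT, forall_mem_reversePath hTinv (ht _).2.1 f hf]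
      rw [← hloop_label, mk_map_eq_one_of_isWalk_of_subset hinv hTtree (hloop_walk e) hloop_tree]
      exact one_mem _
    · exact Subgroup.subset_normalClosure ⟨e, heT, rfl⟩
  · refine Subgroup.normalClosure_mono ?_
    rintro _ ⟨e, -, rfl⟩
    exact ⟨loop e, (hloop_walk e).isPath, (hloop_walk e).isClosedPath, (hloop_label e).symm⟩

/-- Let `Γ` be a connected labelled graph, `v₀` a vertex and `T` a spanning tree
(closed under the edge involution, connecting all vertices, containing no nonempty
reduced closed path), and for each vertex `u` let `t u` be the (unique) reduced path
in `T` from `v₀` to `u`. Then the normal closure in `F(S)` of the labels of all closed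
paths of `Γ` equals the normal closure of the elements
`ℓ̄(t (α e)) · ℓ(e) · ℓ̄(t (ω e))⁻¹` for the edges `e ∉ T`. -/
theorem normalClosure_closed_eq_normalClosure_basis
    {V E S : Type*} (G : LabGraph V E) (ℓ : E → S × Bool)
    (hinv : ∀ e, ℓ (G.inv e) = ((ℓ e).1, !(ℓ e).2))
    (hconn : ∀ u v : V, ∃ p : List E, IsPath G p ∧ HasEnds G p u v)
    (v₀ : V) (T : Set E)
    (hTinv : ∀ e ∈ T, G.inv e ∈ T)
    (hTconn : ∀ u v : V, ∃ p : List E, IsPath G p ∧ (∀ e ∈ p, e ∈ T) ∧ HasEnds G p u v)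
    (hTtree : ∀ p : List E, IsPath G p → (∀ e ∈ p, e ∈ T) → IsReducedPath G p →
      IsClosedPath G p → p = [])
    (t : V → List E)
    (ht : ∀ u : V, IsPath G (t u) ∧ (∀ e ∈ t u, e ∈ T) ∧ IsReducedPath G (t u) ∧
      HasEnds G (t u) v₀ u) :
    Subgroup.normalClosure
        {x : FreeGroup S | ∃ p : List E, IsPath G p ∧ IsClosedPath G p ∧
          x = FreeGroup.mk (p.map ℓ)} =
      Subgroup.normalClosure
        {x : FreeGroup S | ∃ e : E, e ∉ T ∧
          x = FreeGroup.mk ((t (G.init e)).map ℓ) * FreeGroup.mk [ℓ e] *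
            (FreeGroup.mk ((t (G.term e)).map ℓ))⁻¹} :=
  normalClosure_closed_eq_normalClosure_basis_general G ℓ hinv v₀ T hTinv hTtree t ht
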